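/- arXiv:1504.04560 — 2 statements merged into one kernel-verified Lean document; each statement's English description precedes it below -/
import Mathlib

section
/- (Weak-type L^1 bound for the coarsened maximal operator.) There exists a constant C depending only on the dimension d such that for every h ≥ 0, every φ ∈ L^1(ℝ^d), and every t > 0, the measure of the superlevel set {x ∈ ℝ^d : M_h(φ)(x) > t} is at most (C/t) · ∫_{ℝ^d} (⨍_{B_h(x)} |φ(y)| dy) dx, where for h = 0 the inner average is interpreted as |φ(x)|. -/
/-!
Fubini over the pairs `(z, y)` with `|y - z| < h` shows that, for `r ≥ h`, the mass of `|φ|` on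
`B_r(x)` is at most the mass of the `h`-averages on `B_{2r}(x)`. So every point of
`{M_h φ > t}` is the centre of a ball `B_{2r}(x)` whose coarsened mass exceeds
`t |B_r(x)| = 8⁻ᵈ t |B_{8r}(x)|`, and the Vitali covering lemma gives the bound with `C = 8ᵈ`.
-/

open MeasureTheory Metric
open scoped ENNReal

noncomputable def coarseMax {d : ℕ} (h : ℝ) (φ : EuclideanSpace ℝ (Fin d) → ℝ)
    (x : EuclideanSpace ℝ (Fin d)) : ℝ≥0∞ :=
  ⨆ (r : ℝ) (_ : h < r), ⨍⁻ y in ball x r, (‖φ y‖₊ : ℝ≥0∞) ∂volume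

noncomputable def coarseAvg {d : ℕ} (h : ℝ) (φ : EuclideanSpace ℝ (Fin d) → ℝ)
    (x : EuclideanSpace ℝ (Fin d)) : ℝ≥0∞ :=
  if h = 0 then (‖φ x‖₊ : ℝ≥0∞) else ⨍⁻ y in ball x h, (‖φ y‖₊ : ℝ≥0∞) ∂volume

section Vitali

variable {X : Type*} [MetricSpace X] [TopologicalSpace.SeparableSpace X] [MeasurableSpace X]
  [OpensMeasurableSpace X] (μ : Measure X) {s : Set X} {g : X → ℝ≥0∞} {A : ℝ≥0∞}

theorem measure_le_mul_lintegral_of_forall_exists_closedBall_of_radius_le {R : ℝ}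
    (hs : ∀ x ∈ s, ∃ ρ, 0 < ρ ∧ ρ ≤ R ∧
      μ (closedBall x (4 * ρ)) ≤ A * ∫⁻ y in closedBall x ρ, g y ∂μ) :
    μ s ≤ A * ∫⁻ y, g y ∂μ := by
  choose! ρ hρ_pos hρ_le hρ using hs
  obtain ⟨u, hus, hu_disj, hu_cover⟩ :=
    Vitali.exists_disjoint_subfamily_covering_enlargement_closedBall s id ρ R hρ_le 4
      (by norm_num)
  have hu : u.Countable := hu_disj.countable_of_nonempty_interior fun a ha =>
    (nonempty_ball.2 (hρ_pos a (hus ha))).mono ball_subset_interior_closedBall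
  have hs_cover : s ⊆ ⋃ a ∈ u, closedBall a (4 * ρ a) := fun x hx => by
    obtain ⟨a, ha, hxa⟩ := hu_cover x hx
    exact Set.mem_biUnion ha (hxa (mem_closedBall_self (hρ_pos x hx).le))
  calc μ s ≤ ∑' a : u, μ (closedBall a (4 * ρ a)) :=
        (measure_mono hs_cover).trans (measure_biUnion_le μ hu _)
    _ ≤ ∑' a : u, A * ∫⁻ y in closedBall a (ρ a), g y ∂μ :=
        ENNReal.tsum_le_tsum fun a => hρ a (hus a.2)
    _ = A * ∫⁻ y in ⋃ a ∈ u, closedBall a (ρ a), g y ∂μ := by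
        rw [ENNReal.tsum_mul_left, lintegral_biUnion (s := fun a => closedBall a (ρ a)) hu
          (fun _ _ => measurableSet_closedBall) hu_disj]
    _ ≤ A * ∫⁻ y, g y ∂μ := mul_le_mul_right (setLIntegral_le_lintegral _ _) A

theorem measure_le_mul_lintegral_of_forall_exists_closedBall
    (hs : ∀ x ∈ s, ∃ ρ, 0 < ρ ∧ μ (closedBall x (4 * ρ)) ≤ A * ∫⁻ y in closedBall x ρ, g y ∂μ) :
    μ s ≤ A * ∫⁻ y, g y ∂μ := by
  set S : ℕ → Set X := fun n => {x | ∃ ρ : ℝ, 0 < ρ ∧ ρ ≤ n ∧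
    μ (closedBall x (4 * ρ)) ≤ A * ∫⁻ y in closedBall x ρ, g y ∂μ}
  have hS_mono : Monotone S := fun m n hmn x ⟨ρ, hρ, hρm, hx⟩ =>
    ⟨ρ, hρ, hρm.trans (Nat.cast_le.2 hmn), hx⟩
  have hs_sub : s ⊆ ⋃ n, S n := fun x hx => by
    obtain ⟨ρ, hρ, hx⟩ := hs x hx
    obtain ⟨n, hn⟩ := exists_nat_ge ρ
    exact Set.mem_iUnion.2 ⟨n, ρ, hρ, hn, hx⟩
  calc μ s ≤ μ (⋃ n, S n) := measure_mono hs_sub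
    _ = ⨆ n, μ (S n) := hS_mono.measure_iUnion
    _ ≤ A * ∫⁻ y, g y ∂μ := iSup_le fun n =>
        measure_le_mul_lintegral_of_forall_exists_closedBall_of_radius_le μ (R := n)
          fun _ hx => hx

end Vitali

section Averaging

variable {E : Type*} [NormedAddCommGroup E] [MeasurableSpace E] [BorelSpace E]
  [LocallyCompactSpace E] [SecondCountableTopology E] (μ : Measure E) [μ.IsAddHaarMeasure]

/-- Fubini: each `y ∈ ball x r` lies in `ball z h` for a set of centres `z ∈ ball x R` of
measure `μ (ball 0 h)`. -/
theorem measure_ball_mul_setLIntegral_le {f : E → ℝ≥0∞} (hf : AEMeasurable f μ) (x : E)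
    {h r R : ℝ} (hR : r + h ≤ R) :
    μ (ball 0 h) * ∫⁻ y in ball x r, f y ∂μ ≤
      ∫⁻ z in ball x R, ∫⁻ y in ball z h, f y ∂μ ∂μ := by
  have hF : AEMeasurable (Function.uncurry fun z y => (ball z h).indicator f y)
      ((μ.restrict (ball x R)).prod μ) := by
    refine hf.comp_snd.indicator (s := {p : E × E | dist p.2 p.1 < h}) ?_
    exact (isOpen_lt (by fun_prop) continuous_const).measurableSet
  have hcentres : ∀ y ∈ ball x r,
      ∫⁻ z in ball x R, (ball z h).indicator f y ∂μ = f y * μ (ball 0 h) := fun y hy => by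
    have hsub : ball y h ⊆ ball x R := ball_subset_ball' (by rw [mem_ball] at hy; linarith)
    have hind : ∀ z, (ball z h).indicator f y = (ball y h).indicator (fun _ => f y) z :=
      fun z => by simp only [Set.indicator, mem_ball, dist_comm]
    simp_rw [hind]
    rw [lintegral_indicator_const measurableSet_ball, Measure.restrict_apply measurableSet_ball,
      Set.inter_eq_self_of_subset_left hsub, Measure.addHaar_ball_center]
  calc μ (ball 0 h) * ∫⁻ y in ball x r, f y ∂μ
      = ∫⁻ y in ball x r, ∫⁻ z in ball x R, (ball z h).indicator f y ∂μ ∂μ := by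
        rw [← lintegral_const_mul'' _ hf.restrict]
        exact setLIntegral_congr_fun measurableSet_ball fun y hy => by
          rw [hcentres y hy, mul_comm]
    _ ≤ ∫⁻ y, ∫⁻ z in ball x R, (ball z h).indicator f y ∂μ ∂μ := setLIntegral_le_lintegral _ _
    _ = ∫⁻ z in ball x R, ∫⁻ y in ball z h, f y ∂μ ∂μ := by
        rw [← lintegral_lintegral_swap hF]
        simp_rw [lintegral_indicator measurableSet_ball]

end Averaging

section Coarse

variable {d : ℕ} {h r : ℝ} {φ : EuclideanSpace ℝ (Fin d) → ℝ}

theorem setLIntegral_ball_le_setLIntegral_coarseAvg (hh : 0 ≤ h) (hr : h ≤ r)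
    (hφ : AEStronglyMeasurable φ volume) (x : EuclideanSpace ℝ (Fin d)) :
    ∫⁻ y in ball x r, (‖φ y‖₊ : ℝ≥0∞) ≤ ∫⁻ z in ball x (2 * r), coarseAvg h φ z := by
  rcases hh.eq_or_lt with rfl | hh
  · simp only [coarseAvg, if_true]
    exact lintegral_mono_set (ball_subset_ball (by linarith))
  set c := volume (ball (0 : EuclideanSpace ℝ (Fin d)) h)
  have hc : c ≠ 0 := (measure_ball_pos volume 0 hh).ne'
  have hc' : c ≠ ∞ := measure_ball_lt_top.ne
  have havg : ∀ z, coarseAvg h φ z = c⁻¹ * ∫⁻ y in ball z h, (‖φ y‖₊ : ℝ≥0∞) := fun z => by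
    rw [coarseAvg, if_neg hh.ne', setLAverage_eq, Measure.addHaar_ball_center,
      ENNReal.div_eq_inv_mul]
  simp_rw [havg]
  rw [lintegral_const_mul' _ _ (ENNReal.inv_ne_top.2 hc), ← ENNReal.mul_le_iff_le_inv hc hc']
  exact measure_ball_mul_setLIntegral_le volume hφ.enorm x (by linarith)

theorem volume_closedBall_le_of_lt_setLAverage (hh : 0 ≤ h) (hr : h < r) {t : ℝ} (ht : 0 < t)
    (hφ : AEStronglyMeasurable φ volume) {x : EuclideanSpace ℝ (Fin d)}
    (hx : ENNReal.ofReal t < ⨍⁻ y in ball x r, (‖φ y‖₊ : ℝ≥0∞) ∂volume) :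
    volume (closedBall x (4 * (2 * r))) ≤
      ENNReal.ofReal (8 ^ d / t) * ∫⁻ z in closedBall x (2 * r), coarseAvg h φ z := by
  have hr₀ : 0 < r := hh.trans_lt hr
  have hvol :
      volume (closedBall x (4 * (2 * r))) = ENNReal.ofReal (8 ^ d) * volume (ball x r) := by
    rw [Measure.addHaar_closedBall _ _ (by positivity), Measure.addHaar_ball_of_pos _ _ hr₀,
      finrank_euclideanSpace_fin, ← mul_assoc (ENNReal.ofReal _),
      ← ENNReal.ofReal_mul (by positivity), ← mul_pow, ← mul_assoc,
      show (4 : ℝ) * 2 = 8 by norm_num]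
  have hmass : ENNReal.ofReal t * volume (ball x r) ≤
      ∫⁻ z in closedBall x (2 * r), coarseAvg h φ z := by
    rw [setLAverage_eq, ENNReal.lt_div_iff_mul_lt (.inl (measure_ball_pos volume x hr₀).ne')
      (.inl measure_ball_lt_top.ne)] at hx
    calc ENNReal.ofReal t * volume (ball x r) ≤ ∫⁻ y in ball x r, (‖φ y‖₊ : ℝ≥0∞) := hx.le
      _ ≤ ∫⁻ z in ball x (2 * r), coarseAvg h φ z :=
          setLIntegral_ball_le_setLIntegral_coarseAvg hh hr.le hφ x
      _ ≤ ∫⁻ z in closedBall x (2 * r), coarseAvg h φ z :=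
          lintegral_mono_set ball_subset_closedBall
  rw [hvol, ENNReal.ofReal_div_of_pos ht, div_eq_mul_inv, mul_assoc]
  gcongr
  rwa [← ENNReal.mul_le_iff_le_inv (ENNReal.ofReal_pos.2 ht).ne' ENNReal.ofReal_ne_top]

end Coarse

theorem stmt1 (d : ℕ) :
    ∃ C : ℝ, 0 < C ∧ ∀ (h : ℝ), 0 ≤ h →
    ∀ φ : EuclideanSpace ℝ (Fin d) → ℝ, Integrable φ volume →
    ∀ t : ℝ, 0 < t →
    volume {x | ENNReal.ofReal t < coarseMax h φ x} ≤
      ENNReal.ofReal (C / t) * ∫⁻ x, coarseAvg h φ x ∂volume := by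
  refine ⟨8 ^ d, by positivity, fun h hh φ hφ t ht => ?_⟩
  refine measure_le_mul_lintegral_of_forall_exists_closedBall volume fun x hx => ?_
  simp only [Set.mem_ofPred_eq, coarseMax, lt_iSup_iff, exists_prop] at hx
  obtain ⟨r, hr, hx⟩ := hx
  exact ⟨2 * r, by linarith, volume_closedBall_le_of_lt_setLAverage hh hr ht hφ.1 hx⟩
end

section
/- (Vitali-type covering of the complement.) Let R ≥ 10, t > 0 and let A ⊆ ℝ^d be a closed set such that B_{R/40}(x) ∩ A ≠ ∅ for all x ∈ B_{R/2}. Then there exists a finite collection of pairwise disjoint balls {B_{r_i}(y_i)}_{i=1}^N with r_i ∈ [1, R/40] and y_i ∈ B_{R/2}, such that B_{r_i/2}(y_i) ⊆ B_{R/2} \ A, B_{r_i}(y_i) ∩ A ≠ ∅, and {x ∈ B_{R/2} : dist(x, A) > 2} ⊆ ∪_{i=1}^N B_{5 r_i}(y_i). -/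
open MeasureTheory Metric Filter

lemma stmt13_aux {d : ℕ} {R : ℝ} (hR : 10 ≤ R)
    {A : Set (EuclideanSpace ℝ (Fin d))}
    (hAne : ∀ x ∈ ball (0 : EuclideanSpace ℝ (Fin d)) (R/2),
      (ball x (R/40) ∩ A).Nonempty)
    {x : EuclideanSpace ℝ (Fin d)}
    (hx : x ∈ ball (0 : EuclideanSpace ℝ (Fin d)) (R/2))
    (hD : 2 < Metric.infDist x A) :
    ∃ (y : EuclideanSpace ℝ (Fin d)) (r : ℝ),
      1 ≤ r ∧ r ≤ R/40 ∧ y ∈ ball (0 : EuclideanSpace ℝ (Fin d)) (R/2) ∧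
      ball y (r/2) ⊆ ball (0 : EuclideanSpace ℝ (Fin d)) (R/2) \ A ∧
      (ball y r ∩ A).Nonempty ∧ dist x y < r := by
  have hAnonempty : A.Nonempty := (hAne x hx).imp fun a ha => ha.2
  have hxn : ‖x‖ < R/2 := by simpa using mem_ball_zero_iff.1 hx
  have hDR : Metric.infDist x A < R/40 := by
    obtain ⟨a, hab, haA⟩ := hAne x hx
    exact lt_of_le_of_lt (Metric.infDist_le_dist_of_mem haA)
      (by simpa [dist_comm] using mem_ball.1 hab)
  have hR80 : 80 < R := by linarith
  set f : ℝ → ℝ := fun s => Metric.infDist ((1 - s/‖x‖) • x) A with hfdef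
  have hfc : Continuous f := by
    apply (continuous_infDist_pt A).comp
    continuity
  set h : ℝ → ℝ := fun s => (‖x‖ - s) + min (f s) (R/80) with hhdef
  have hhc : Continuous h := ((continuous_const.sub continuous_id).add
    (hfc.min continuous_const))
  set K : Set ℝ := Set.Icc 0 ‖x‖ ∩ {s | h s ≤ R/2} with hKdef
  have hKc : IsClosed K := isClosed_Icc.inter (isClosed_le hhc continuous_const)
  have hKne : ‖x‖ ∈ K := by
    refine ⟨⟨norm_nonneg x, le_refl _⟩, ?_⟩
    have : min (f ‖x‖) (R/80) ≤ R/80 := min_le_right _ _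
    simp only [Set.mem_setOf_eq, hhdef]
    linarith
  have hBdd : BddBelow K := ⟨0, fun s hs => hs.1.1⟩
  set s₀ := sInf K with hs₀def
  have hs₀K : s₀ ∈ K := hKc.csInf_mem ⟨_, hKne⟩ hBdd
  obtain ⟨⟨hs₀0, hs₀x⟩, hs₀h⟩ := hs₀K
  set y := (1 - s₀/‖x‖) • x with hydef
  have hdiv : s₀/‖x‖*‖x‖ = s₀ := by
    rcases eq_or_lt_of_le (norm_nonneg x) with hx0 | hx0
    · have : s₀ = 0 := le_antisymm (by rw [← hx0] at hs₀x; exact hs₀x) hs₀0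
      simp [this]
    · exact div_mul_cancel₀ _ (ne_of_gt hx0)
  have hcnn : 0 ≤ s₀/‖x‖ := div_nonneg hs₀0 (norm_nonneg x)
  have hcle : s₀/‖x‖ ≤ 1 := by
    rcases eq_or_lt_of_le (norm_nonneg x) with hx0 | hx0
    · rw [← hx0]; simp
    · exact (div_le_one hx0).2 hs₀x
  have hdxy : dist x y = s₀ := by
    have hxy : x - y = (s₀/‖x‖) • x := by
      rw [hydef, sub_smul, one_smul]; abel
    rw [dist_eq_norm, hxy, norm_smul, Real.norm_eq_abs, abs_of_nonneg hcnn, hdiv]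
  have hyn : ‖y‖ = ‖x‖ - s₀ := by
    rw [hydef, norm_smul, Real.norm_eq_abs, abs_of_nonneg (by linarith : (0:ℝ) ≤ 1 - s₀/‖x‖),
      sub_mul, one_mul, hdiv]
  have hfE : f s₀ = Metric.infDist y A := rfl
  have hyball : y ∈ ball (0 : EuclideanSpace ℝ (Fin d)) (R/2) :=
    mem_ball_zero_iff.2 (by rw [hyn]; linarith)
  have hEltR : Metric.infDist y A < R/40 := by
    obtain ⟨a, hab, haA⟩ := hAne y hyball
    exact lt_of_le_of_lt (Metric.infDist_le_dist_of_mem haA)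
      (by simpa [dist_comm] using mem_ball.1 hab)
  have hEnn : 0 ≤ Metric.infDist y A := Metric.infDist_nonneg
  -- key claim
  have hkey : 1 < Metric.infDist y A ∧ s₀ < min (2 * Metric.infDist y A) (R/40) := by
    rcases eq_or_lt_of_le hs₀0 with h0 | h0
    · have hxy : x = y := by
        have : dist x y = 0 := by rw [hdxy, ← h0]
        exact dist_eq_zero.1 this
      rw [← hxy]
      exact ⟨by linarith, by rw [← h0]; exact lt_min (by linarith) (by linarith)⟩
    · have hge : R/2 ≤ h s₀ := by
        have hclos : s₀ ∈ closure (Set.Ioo 0 s₀) := by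
          rw [closure_Ioo (ne_of_lt h0)]; exact ⟨hs₀0, le_refl _⟩
        haveI hnb : (nhdsWithin s₀ (Set.Ioo 0 s₀)).NeBot :=
          mem_closure_iff_nhdsWithin_neBot.1 hclos
        refine ge_of_tendsto (x := nhdsWithin s₀ (Set.Ioo 0 s₀))
          (hhc.continuousAt.continuousWithinAt) ?_
        filter_upwards [self_mem_nhdsWithin] with s hs
        by_contra hcon
        push_neg at hcon
        have hsK : s ∈ K := ⟨⟨hs.1.le, le_trans hs.2.le hs₀x⟩, hcon.le⟩
        exact absurd (csInf_le hBdd hsK) (not_le.2 hs.2)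
      have heq : (‖x‖ - s₀) + min (Metric.infDist y A) (R/80) = R/2 := by
        have := le_antisymm hs₀h hge
        rw [hhdef] at this
        simpa [hfE] using this
      have hminl : min (Metric.infDist y A) (R/80) ≤ Metric.infDist y A := min_le_left _ _
      have hminr : min (Metric.infDist y A) (R/80) ≤ R/80 := min_le_right _ _
      have hmin : s₀ < min (Metric.infDist y A) (R/80) := by linarith
      have hE1 : 1 < Metric.infDist y A := by
        rcases le_or_gt s₀ 1 with hs1 | hs1
        · have := Metric.infDist_le_infDist_add_dist (x := x) (y := y) (s := A)
          rw [hdxy] at this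
          linarith
        · linarith
      exact ⟨hE1, lt_min (by linarith) (by linarith)⟩
  obtain ⟨hE1, hs₀lt⟩ := hkey
  set r := min (2 * Metric.infDist y A) (R/40) with hrdef
  have hrl : r ≤ 2 * Metric.infDist y A := min_le_left _ _
  have hrr : r ≤ R/40 := min_le_right _ _
  have h2r : 2 < r := lt_min (by linarith) (by linarith)
  refine ⟨y, r, by linarith, hrr, hyball, ?_, ?_, ?_⟩
  · intro z hz
    have hzy : dist z y < r/2 := mem_ball.1 hz
    have hmin2 : (‖x‖ - s₀) + min (f s₀) (R/80) ≤ R/2 := hs₀h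
    rw [hfE] at hmin2
    have hminl : min (Metric.infDist y A) (R/80) ≤ Metric.infDist y A := min_le_left _ _
    have hrE : r/2 ≤ Metric.infDist y A := by linarith
    have hrR : r/2 ≤ R/80 := by linarith
    have hr2min : r/2 ≤ min (Metric.infDist y A) (R/80) := le_min hrE hrR
    constructor
    · have : dist z (0 : EuclideanSpace ℝ (Fin d)) ≤ dist z y + dist y 0 := dist_triangle _ _ _
      have hy0 : dist y (0 : EuclideanSpace ℝ (Fin d)) = ‖y‖ := by simp
      rw [mem_ball]
      rw [hy0, hyn] at this
      linarith
    · intro hzA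
      have := Metric.infDist_le_dist_of_mem (x := y) hzA
      rw [dist_comm] at this
      linarith
  · have : Metric.infDist y A < r := lt_min (by linarith) hEltR
    obtain ⟨a, haA, hda⟩ := (Metric.infDist_lt_iff hAnonempty).1 this
    exact ⟨a, mem_ball.2 (by rw [dist_comm]; exact hda), haA⟩
  · rw [hdxy]; exact lt_of_lt_of_le hs₀lt (le_refl _)
theorem stmt13 {d : ℕ} (R t : ℝ) (hR : 10 ≤ R) (ht : 0 < t)
    (A : Set (EuclideanSpace ℝ (Fin d))) (hA : IsClosed A)
    (hAne : ∀ x ∈ ball (0 : EuclideanSpace ℝ (Fin d)) (R/2),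
      (ball x (R/40) ∩ A).Nonempty) :
    ∃ (N : ℕ) (y : Fin N → EuclideanSpace ℝ (Fin d)) (r : Fin N → ℝ),
      (∀ i, 1 ≤ r i ∧ r i ≤ R/40 ∧
        y i ∈ ball (0 : EuclideanSpace ℝ (Fin d)) (R/2) ∧
        ball (y i) (r i / 2) ⊆ ball (0 : EuclideanSpace ℝ (Fin d)) (R/2) \ A ∧
        (ball (y i) (r i) ∩ A).Nonempty) ∧
      (Pairwise fun i j => Disjoint (ball (y i) (r i)) (ball (y j) (r j))) ∧
      {x ∈ ball (0 : EuclideanSpace ℝ (Fin d)) (R/2) | 2 < Metric.infDist x A}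
        ⊆ ⋃ i, ball (y i) (5 * r i) := by
  classical
  set S : Set (EuclideanSpace ℝ (Fin d)) :=
    {x ∈ ball (0 : EuclideanSpace ℝ (Fin d)) (R/2) | 2 < Metric.infDist x A} with hSdef
  have key : ∀ x : EuclideanSpace ℝ (Fin d), ∃ (y : EuclideanSpace ℝ (Fin d)) (r : ℝ),
      x ∈ S → (1 ≤ r ∧ r ≤ R/40 ∧ y ∈ ball (0 : EuclideanSpace ℝ (Fin d)) (R/2) ∧
        ball y (r/2) ⊆ ball (0 : EuclideanSpace ℝ (Fin d)) (R/2) \ A ∧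
        (ball y r ∩ A).Nonempty ∧ dist x y < r) := by
    intro x
    by_cases hx : x ∈ S
    · obtain ⟨y, r, hp⟩ := stmt13_aux hR hAne hx.1 hx.2
      exact ⟨y, r, fun _ => hp⟩
    · exact ⟨0, 1, fun h => absurd h hx⟩
  choose Y r hYr using key
  obtain ⟨u, huS, hdisj, hcov⟩ :=
    Vitali.exists_disjoint_subfamily_covering_enlargement
      (fun x => ball (Y x) (r x)) S r 2 one_lt_two
      (fun a ha => by linarith [(hYr a ha).1])
      (R/40) (fun a ha => (hYr a ha).2.1)
      (fun a ha => nonempty_ball.2 (by linarith [(hYr a ha).1]))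
  -- u is finite
  have hsep : ∀ a ∈ u, ∀ b ∈ u, a ≠ b → 2 ≤ dist (Y a) (Y b) := by
    intro a ha b hb hab
    have hra := (hYr a (huS ha)).1
    have hrb := (hYr b (huS hb)).1
    have := (disjoint_ball_ball_iff (by linarith) (by linarith)).1 (hdisj ha hb hab)
    linarith
  have htb : TotallyBounded (ball (0 : EuclideanSpace ℝ (Fin d)) (R/2)) :=
    TotallyBounded.subset ball_subset_closedBall
      (isCompact_closedBall (0 : EuclideanSpace ℝ (Fin d)) (R/2)).totallyBounded
  obtain ⟨F, hFfin, hFcov⟩ := (totallyBounded_iff.1 htb) 1 one_pos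
  have hgex : ∀ a : u, ∃ z : F, Y (a : EuclideanSpace ℝ (Fin d)) ∈ ball (z : EuclideanSpace ℝ (Fin d)) 1 := by
    rintro ⟨a, ha⟩
    have : Y a ∈ ⋃ z ∈ F, ball z 1 := hFcov (hYr a (huS ha)).2.2.1
    simpa using this
  choose g hg using hgex
  have hginj : Function.Injective g := by
    rintro ⟨a, ha⟩ ⟨b, hb⟩ hgab
    by_contra hne
    have hab : a ≠ b := fun hc => hne (Subtype.ext hc)
    have h1 := hg ⟨a, ha⟩
    have h2 := hg ⟨b, hb⟩
    rw [hgab] at h1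
    have : dist (Y a) (Y b) ≤ dist (Y a) ((g ⟨b, hb⟩ : EuclideanSpace ℝ (Fin d)))
        + dist ((g ⟨b, hb⟩ : EuclideanSpace ℝ (Fin d))) (Y b) := dist_triangle _ _ _
    have hd1 : dist (Y a) ((g ⟨b, hb⟩ : EuclideanSpace ℝ (Fin d))) < 1 := mem_ball.1 h1
    have hd2 : dist ((g ⟨b, hb⟩ : EuclideanSpace ℝ (Fin d))) (Y b) < 1 := by
      rw [dist_comm]; exact mem_ball.1 h2
    have := hsep a ha b hb hab
    linarith
  haveI : Finite F := hFfin.to_subtype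
  have hufin : u.Finite := Set.finite_coe_iff.1 (Finite.of_injective g hginj)
  haveI := hufin.fintype
  set e := Fintype.equivFin u with hedef
  refine ⟨Fintype.card u, fun i => Y ((e.symm i : u) : EuclideanSpace ℝ (Fin d)),
    fun i => r ((e.symm i : u) : EuclideanSpace ℝ (Fin d)), ?_, ?_, ?_⟩
  · intro i
    have h := hYr _ (huS (e.symm i).2)
    exact ⟨h.1, h.2.1, h.2.2.1, h.2.2.2.1, h.2.2.2.2.1⟩
  · intro i j hij
    have hne : ((e.symm i : u) : EuclideanSpace ℝ (Fin d)) ≠ ((e.symm j : u) : EuclideanSpace ℝ (Fin d)) := by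
      intro hc
      exact hij (by simpa using congrArg e (Subtype.ext hc : (e.symm i : u) = e.symm j))
    exact hdisj (e.symm i).2 (e.symm j).2 hne
  · intro x hx
    obtain ⟨b, hbu, hinter, hrle⟩ := hcov x hx
    obtain ⟨z, hz1, hz2⟩ := hinter
    have hYx := (hYr x hx).2.2.2.2.2
    have hrb := (hYr b (huS hbu)).1
    have hd1 : dist z (Y x) < r x := mem_ball.1 hz1
    have hd2 : dist z (Y b) < r b := mem_ball.1 hz2
    have hxb : dist x (Y b) < 5 * r b := by
      have t1 : dist x (Y b) ≤ dist x (Y x) + dist (Y x) (Y b) := dist_triangle _ _ _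
      have t2 : dist (Y x) (Y b) ≤ dist (Y x) z + dist z (Y b) := dist_triangle _ _ _
      rw [dist_comm (Y x) z] at t2
      linarith
    refine Set.mem_iUnion.2 ⟨e ⟨b, hbu⟩, mem_ball.2 ?_⟩
    simpa using hxb
end
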